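/- For positive definite n×n matrices A and B, the geometric mean A ♯ B is the unique positive definite solution X of the Riccati equation X A⁻¹ X = B. -/

import Mathlib

/-!
Write `S = A^{1/2}`. The congruence `X ↦ S⁻¹ X S⁻¹` preserves positive definiteness and turns
the Riccati equation `X A⁻¹ X = B` into `Y * Y = S⁻¹ B S⁻¹`. The latter has exactly one
positive definite solution, the square root `(S⁻¹ B S⁻¹)^{1/2}`, and undoing the congruence
sends it to `A ♯ B`.
-/

open Matrix
open scoped ComplexOrder

/-- The positive square root of a positive semidefinite matrix, realized via the
continuous functional calculus for Hermitian matrices. -/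
noncomputable def msqrt {n : Type*} [Fintype n] [DecidableEq n]
    (A : Matrix n n ℂ) : Matrix n n ℂ := cfc Real.sqrt A

/-- The matrix geometric mean `A ♯ B = A^{1/2} (A^{-1/2} B A^{-1/2})^{1/2} A^{1/2}`. -/
noncomputable def geom {n : Type*} [Fintype n] [DecidableEq n]
    (A B : Matrix n n ℂ) : Matrix n n ℂ :=
  msqrt A * msqrt ((msqrt A)⁻¹ * B * (msqrt A)⁻¹) * msqrt A

namespace Matrix

variable {n R : Type*} [Fintype n] [DecidableEq n] [CommRing R] {S : Matrix n n R}

lemma conj_nonsing_inv_conj_cancel (hS : IsUnit S) (X : Matrix n n R) :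
    S * (S⁻¹ * X * S⁻¹) * S = X := by
  have hS' := (isUnit_iff_isUnit_det S).mp hS
  rw [show S * (S⁻¹ * X * S⁻¹) * S = S * S⁻¹ * X * (S⁻¹ * S) by noncomm_ring,
    mul_nonsing_inv _ hS', nonsing_inv_mul _ hS', one_mul, mul_one]

lemma nonsing_inv_conj_conj_cancel (hS : IsUnit S) (X : Matrix n n R) :
    S⁻¹ * (S * X * S) * S⁻¹ = X := by
  simpa only [nonsing_inv_nonsing_inv S ((isUnit_iff_isUnit_det S).mp hS)] using
    conj_nonsing_inv_conj_cancel (isUnit_nonsing_inv_iff.mpr hS) X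

lemma conj_mul_inv_mul_conj (hS : IsUnit S) (Y : Matrix n n R) :
    S * Y * S * (S * S)⁻¹ * (S * Y * S) = S * (Y * Y) * S := by
  have hS' := (isUnit_iff_isUnit_det S).mp hS
  rw [mul_inv_rev, show S * Y * S * (S⁻¹ * S⁻¹) * (S * Y * S) =
      S * Y * (S * S⁻¹) * (S⁻¹ * S) * Y * S by noncomm_ring,
    mul_nonsing_inv _ hS', nonsing_inv_mul _ hS', mul_one, mul_one]
  noncomm_ring

lemma IsHermitian.posDef_conj_iff [PartialOrder R] [StarRing R] {X : Matrix n n R}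
    (hS : S.IsHermitian) (hSu : IsUnit S) : (S * X * S).PosDef ↔ X.PosDef := by
  simpa only [star_eq_conjTranspose, hS.eq] using hSu.posDef_star_left_conjugate_iff (x := X)

end Matrix

section msqrt

open scoped MatrixOrder

variable {n : Type*} [Fintype n] [DecidableEq n] {A X : Matrix n n ℂ}

lemma msqrt_eq_cfcSqrt (hA : A.PosSemidef) : msqrt A = CFC.sqrt A := by
  rw [msqrt, CFC.sqrt_eq_real_sqrt A hA.nonneg, cfcₙ_eq_cfc]

lemma msqrt_mul_msqrt (hA : A.PosSemidef) : msqrt A * msqrt A = A := by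
  rw [msqrt_eq_cfcSqrt hA, CFC.sqrt_mul_sqrt_self A hA.nonneg]

lemma Matrix.PosDef.msqrt (hA : A.PosDef) : (msqrt A).PosDef := by
  rw [msqrt_eq_cfcSqrt hA.posSemidef, ← isStrictlyPositive_iff_posDef]
  exact IsStrictlyPositive.sqrt A hA.isStrictlyPositive

lemma msqrt_mul_self (hX : X.PosSemidef) : msqrt (X * X) = X := by
  have hXX : (X * X).PosSemidef := by
    simpa only [hX.isHermitian.eq] using posSemidef_conjTranspose_mul_self X
  rw [msqrt_eq_cfcSqrt hXX, CFC.sqrt_mul_self X hX.nonneg]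

end msqrt

/-- For positive definite `A, B`, the geometric mean `A ♯ B` is the unique positive
definite solution `X` of the Riccati equation `X A⁻¹ X = B`. -/
theorem geom_unique_riccati_solution {n : Type*} [Fintype n] [DecidableEq n]
    (A B : Matrix n n ℂ) (hA : A.PosDef) (hB : B.PosDef) :
    (geom A B).PosDef ∧ geom A B * A⁻¹ * geom A B = B ∧
      ∀ X : Matrix n n ℂ, X.PosDef → X * A⁻¹ * X = B → X = geom A B := by
  set S := msqrt A with hS
  have hSpd : S.PosDef := hA.msqrt
  have hA_eq : A = S * S := (msqrt_mul_msqrt hA.posSemidef).symm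
  have hSinv : S⁻¹.IsHermitian := hSpd.inv.isHermitian
  have hC : (S⁻¹ * B * S⁻¹).PosDef := (hSinv.posDef_conj_iff hSpd.inv.isUnit).mpr hB
  refine ⟨(hSpd.isHermitian.posDef_conj_iff hSpd.isUnit).mpr hC.msqrt, ?_, ?_⟩
  · rw [geom, ← hS, hA_eq, conj_mul_inv_mul_conj hSpd.isUnit, msqrt_mul_msqrt hC.posSemidef,
      conj_nonsing_inv_conj_cancel hSpd.isUnit]
  · intro X hX hXB
    set Y := S⁻¹ * X * S⁻¹
    have hXY : X = S * Y * S := (conj_nonsing_inv_conj_cancel hSpd.isUnit X).symm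
    have hY : Y.PosDef := (hSinv.posDef_conj_iff hSpd.inv.isUnit).mpr hX
    have hYY : Y * Y = S⁻¹ * B * S⁻¹ := by
      rw [← hXB, hA_eq, hXY, conj_mul_inv_mul_conj hSpd.isUnit,
        nonsing_inv_conj_conj_cancel hSpd.isUnit]
    rw [geom, ← hS, ← hYY, msqrt_mul_self hY.posSemidef, ← hXY]
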